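/- arXiv:2506.02428 — 7 statements merged into one kernel-verified Lean document; each statement's English description precedes it below -/
import Mathlib

section
/- Let A and B be 2×2 real matrices, and let 𝔤 be the Lie subalgebra of gl(2,ℝ) generated by the set {A + u·B : u ∈ ℝ} (with Lie bracket [X,Y] = XY − YX). Then the following are equivalent: (i) for every nonzero x ∈ ℝ², the linear span of {M·x : M ∈ 𝔤} is all of ℝ² (the Lie algebra rank condition); (ii) there exist matrices Ã and B̃ in 𝔤 such that tr(adj(Ã)·B̃)² − 4·det(adj(Ã)·B̃) < 0, where adj denotes the adjugate (classical adjoint) matrix. -/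
/-!
For `2 × 2` matrices `det (s A + t B) = det A s² + tr (adj A B) s t + det B t²`, a binary
quadratic form of discriminant `tr (adj A B)² - 4 det (adj A B)`. It is definite iff the pencil
`s A + t B` contains no singular matrix, i.e. iff `A x` and `B x` are independent for every
`x ≠ 0`; such a pair in the Lie algebra `L` clearly gives the rank condition.

Conversely let `H = L ∩ sl₂`, so that `dim L ≤ dim H + 1`. If `H = sl₂`, an explicit pair
works. If `dim H = 2`, then `H` is not abelian (commuting traceless `2 × 2` matrices are
dependent), so `[H, H]` is spanned by one bracket `C = [U, W] ≠ 0`, and `tr C² = 0` forces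
`det C = 0`. Since `[L, H] ⊆ H`, the Jacobi identity gives `[L, C] ⊆ ℝ C`, so `L` maps `ker C`
into itself and the rank condition fails on `ker C`. If `dim H ≤ 1`, then `dim L ≤ 2` and
evaluation at any `x ≠ 0` is an isomorphism `L ≃ ℝ²`, so any basis of `L` is a pair as required.
-/

attribute [local instance 100] LieRing.ofAssociativeRing

open Matrix Module LieAlgebra.SpecialLinear

section Pencil

variable {K : Type*} [Field K]

theorem forall_linearIndependent_mulVec_pair_iff {n : Type*} [Fintype n] [DecidableEq n]
    (A B : Matrix n n K) :
    (∀ x ≠ 0, LinearIndependent K ![A *ᵥ x, B *ᵥ x]) ↔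
      ∀ s t : K, (s • A + t • B).det = 0 → s = 0 ∧ t = 0 := by
  simp only [LinearIndependent.pair_iff, ← exists_mulVec_eq_zero_iff, add_mulVec, smul_mulVec]
  exact ⟨fun h s t ⟨x, hx, hst⟩ ↦ h x hx s t hst,
    fun h x hx s t hst ↦ h s t ⟨x, hx, hst⟩⟩

theorem det_smul_add_smul_fin_two {R : Type*} [CommRing R] (A B : Matrix (Fin 2) (Fin 2) R)
    (s t : R) :
    (s • A + t • B).det = A.det * s ^ 2 + trace (adjugate A * B) * s * t + B.det * t ^ 2 := by
  rw [adjugate_fin_two, eta_fin_two B, mul_fin_two, ← eta_fin_two B]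
  simp [det_fin_two, trace_fin_two]
  ring

theorem det_adjugate_mul_fin_two {R : Type*} [CommRing R] (A B : Matrix (Fin 2) (Fin 2) R) :
    (adjugate A * B).det = A.det * B.det := by
  rw [det_mul, det_adjugate, Fintype.card_fin, pow_one]

end Pencil

theorem forall_quadratic_eq_zero_imp_iff_discrim_neg (a b c : ℝ) :
    (∀ s t : ℝ, a * s ^ 2 + b * s * t + c * t ^ 2 = 0 → s = 0 ∧ t = 0) ↔
      discrim a b c < 0 := by
  constructor
  · intro h
    by_contra! hd
    by_cases ha : a = 0
    · exact one_ne_zero (h 1 0 (by simp [ha])).1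
    obtain ⟨x, hx⟩ :=
      exists_quadratic_eq_zero ha ⟨√(discrim a b c), (Real.mul_self_sqrt hd).symm⟩
    exact one_ne_zero (h x 1 (by linear_combination hx)).2
  · intro hd s t hst
    have ht : t = 0 := by
      by_contra ht
      have key : (2 * a * s + b * t) ^ 2 = discrim a b c * t ^ 2 := by
        rw [discrim]
        linear_combination 4 * a * hst
      nlinarith [sq_nonneg (2 * a * s + b * t),
        mul_neg_of_neg_of_pos hd (by positivity : 0 < t ^ 2)]
    have ha : a ≠ 0 := by
      rintro rfl
      rw [discrim] at hd
      nlinarith [sq_nonneg b]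
    subst ht
    simpa [ha] using hst

theorem forall_linearIndependent_mulVec_pair_iff_discrim_neg (A B : Matrix (Fin 2) (Fin 2) ℝ) :
    (∀ x ≠ 0, LinearIndependent ℝ ![A *ᵥ x, B *ᵥ x]) ↔
      trace (adjugate A * B) ^ 2 - 4 * (adjugate A * B).det < 0 := by
  simp only [forall_linearIndependent_mulVec_pair_iff, det_smul_add_smul_fin_two,
    forall_quadratic_eq_zero_imp_iff_discrim_neg, discrim, det_adjugate_mul_fin_two]
  ring_nf

section Evaluation

variable {K : Type*} [Field K] {m n : Type*} [Fintype n]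

def mulVecLeft (x : n → K) : Matrix m n K →ₗ[K] m → K where
  toFun M := M *ᵥ x
  map_add' M N := add_mulVec M N x
  map_smul' c M := smul_mulVec c M x

theorem span_setOf_mulVec_eq_map (S : Submodule K (Matrix m n K)) (x : n → K) :
    Submodule.span K {y | ∃ M ∈ S, y = M *ᵥ x} = S.map (mulVecLeft x) := by
  rw [← Submodule.span_eq (S.map (mulVecLeft x)), Submodule.map_coe]
  congr 1
  ext y
  simp [mulVecLeft, eq_comm]

theorem map_mulVecLeft_eq_top_of_linearIndependent {S : Submodule K (Matrix (Fin 2) (Fin 2) K)}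
    {M N : Matrix (Fin 2) (Fin 2) K} (hM : M ∈ S) (hN : N ∈ S) {x : Fin 2 → K}
    (h : LinearIndependent K ![M *ᵥ x, N *ᵥ x]) : S.map (mulVecLeft x) = ⊤ := by
  rw [eq_top_iff, ← h.span_eq_top_of_card_eq_finrank' (by simp), Submodule.span_le,
    Matrix.range_cons, Matrix.range_cons, Matrix.range_empty, Set.union_empty]
  rintro _ (rfl | rfl)
  exacts [⟨M, hM, rfl⟩, ⟨N, hN, rfl⟩]

theorem exists_forall_linearIndependent_of_finrank_le_two
    {S : Submodule K (Matrix (Fin 2) (Fin 2) K)} (hS : finrank K S ≤ 2)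
    (h : ∀ x ≠ 0, S.map (mulVecLeft x) = ⊤) :
    ∃ M ∈ S, ∃ N ∈ S, ∀ x ≠ 0, LinearIndependent K ![M *ᵥ x, N *ᵥ x] := by
  have hS2 : finrank K S = 2 := by
    refine le_antisymm hS ?_
    have := Submodule.finrank_map_le (mulVecLeft (Pi.single 0 1)) S
    rwa [h _ (Pi.single_ne_zero_iff.mpr one_ne_zero), finrank_top, finrank_fin_fun] at this
  let b := finBasisOfFinrankEq K S hS2
  refine ⟨b 0, (b 0).2, b 1, (b 1).2, fun x hx ↦ ?_⟩
  let g := mulVecLeft x ∘ₗ S.subtype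
  have hg : Function.Surjective g := by
    rw [← LinearMap.range_eq_top, LinearMap.range_comp, Submodule.range_subtype, h x hx]
  have hg' : Function.Injective g :=
    (LinearMap.injective_iff_surjective_of_finrank_eq_finrank (by rw [hS2, finrank_fin_fun])).mpr hg
  have hgb : ![(b 0 : Matrix (Fin 2) (Fin 2) K) *ᵥ x, (b 1 : Matrix (Fin 2) (Fin 2) K) *ᵥ x] =
      g ∘ b := by
    ext i : 1
    fin_cases i <;> rfl
  rw [hgb]
  exact b.linearIndependent.map' g (LinearMap.ker_eq_bot.mpr hg')

theorem exists_ne_zero_map_mulVecLeft_ne_top [DecidableEq n] {S : Submodule K (Matrix n n K)}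
    {C : Matrix n n K} (hC : C ≠ 0) (hdet : C.det = 0) (h : ∀ M ∈ S, ⁅M, C⁆ ∈ K ∙ C) :
    ∃ x ≠ 0, S.map (mulVecLeft x) ≠ ⊤ := by
  obtain ⟨x, hx, hCx⟩ := exists_mulVec_eq_zero_iff.mpr hdet
  refine ⟨x, hx, ne_top_of_le_ne_top (b := LinearMap.ker C.mulVecLin) ?_ ?_⟩
  · rw [Ne, LinearMap.ker_eq_top]
    intro h0
    exact hC (toLin'.injective (by rw [toLin'_apply', h0, map_zero]))
  · rintro _ ⟨M, hM, rfl⟩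
    obtain ⟨r, hr⟩ := Submodule.mem_span_singleton.mp (h M hM)
    have hCM : C * M = M * C - r • C := by
      rw [hr, Ring.lie_def]
      abel
    change C *ᵥ (M *ᵥ x) = 0
    rw [mulVec_mulVec, hCM, sub_mulVec, smul_mulVec, ← mulVec_mulVec, hCx, mulVec_zero, smul_zero,
      sub_zero]

end Evaluation

section SpecialLinear

variable {K : Type*} [Field K]

theorem finrank_sl_add_one {n : Type*} [Fintype n] [DecidableEq n] [Nonempty n] :
    finrank K (sl n K).toSubmodule + 1 = Fintype.card n * Fintype.card n := by
  have hne : traceLinearMap n K K ≠ 0 := by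
    obtain ⟨i⟩ := ‹Nonempty n›
    exact fun h ↦ one_ne_zero (α := K) (by simpa using LinearMap.congr_fun h (single i i 1))
  have h := Dual.finrank_ker_add_one_of_ne_zero hne
  rwa [finrank_matrix, finrank_self, mul_one] at h

theorem trace_lie_mul_left {R n : Type*} [CommRing R] [Fintype n] [DecidableEq n]
    (X Y : Matrix n n R) : trace (⁅X, Y⁆ * X) = 0 := by
  rw [Ring.lie_def, Matrix.sub_mul, trace_sub, Matrix.mul_assoc, trace_mul_comm X, sub_self]

theorem trace_lie_mul_right {R n : Type*} [CommRing R] [Fintype n] [DecidableEq n]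
    (X Y : Matrix n n R) : trace (⁅X, Y⁆ * Y) = 0 := by
  rw [Ring.lie_def, Matrix.sub_mul, trace_sub, trace_mul_cycle, Matrix.mul_assoc, sub_self]

theorem exists_eq_of_trace_eq_zero {R : Type*} [CommRing R] {U : Matrix (Fin 2) (Fin 2) R}
    (hU : trace U = 0) : ∃ a b c, U = !![a, b; c, -a] := by
  refine ⟨U 0 0, U 0 1, U 1 0, ?_⟩
  rw [trace_fin_two] at hU
  rw [← eq_neg_of_add_eq_zero_right hU, ← eta_fin_two U]

variable [NeZero (2 : K)]

theorem det_eq_zero_of_trace_mul_self_eq_zero {C : Matrix (Fin 2) (Fin 2) K}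
    (h₁ : trace C = 0) (h₂ : trace (C * C) = 0) : C.det = 0 := by
  obtain ⟨a, b, c, rfl⟩ := exists_eq_of_trace_eq_zero h₁
  rw [mul_fin_two, trace_fin_two_of] at h₂
  rw [det_fin_two_of]
  exact mul_left_cancel₀ (two_ne_zero (α := K)) (by linear_combination -h₂)

theorem not_linearIndependent_of_lie_eq_zero {U W : Matrix (Fin 2) (Fin 2) K}
    (hU : trace U = 0) (hW : trace W = 0) (h : ⁅U, W⁆ = 0) : ¬LinearIndependent K ![U, W] := by
  obtain ⟨a, b, c, rfl⟩ := exists_eq_of_trace_eq_zero hU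
  obtain ⟨d, e, f, rfl⟩ := exists_eq_of_trace_eq_zero hW
  rw [Ring.lie_def, sub_eq_zero, mul_fin_two, mul_fin_two] at h
  simp only [mul_neg, neg_mul, neg_neg, EmbeddingLike.apply_eq_iff_eq, vecCons_inj,
    and_true] at h
  obtain ⟨⟨hbf, h01⟩, h10, -⟩ := h
  have hae : a * e = b * d := mul_left_cancel₀ (two_ne_zero (α := K)) (by linear_combination h01)
  have hcd : c * d = a * f := mul_left_cancel₀ (two_ne_zero (α := K)) (by linear_combination h10)
  intro hind
  have vanish (s t : K) (hst : s • !![a, b; c, -a] + t • !![d, e; f, -d] = 0) : t = 0 :=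
    (LinearIndependent.pair_iff.mp hind s t hst).2
  have ha : a = 0 := by
    simpa using vanish d (-a) (by ext i j; fin_cases i <;> fin_cases j <;> simp <;> grind)
  have hb : b = 0 := by
    simpa using vanish e (-b) (by ext i j; fin_cases i <;> fin_cases j <;> simp <;> grind)
  have hc : c = 0 := by
    simpa using vanish f (-c) (by ext i j; fin_cases i <;> fin_cases j <;> simp <;> grind)
  refine hind.ne_zero 0 ?_
  ext i j
  fin_cases i <;> fin_cases j <;> simp [ha, hb, hc]

theorem exists_det_eq_zero_lie_mem_span_singleton
    (L : LieSubalgebra K (Matrix (Fin 2) (Fin 2) K))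
    (hL : finrank K (L ⊓ sl (Fin 2) K).toSubmodule = 2) :
    ∃ C : Matrix (Fin 2) (Fin 2) K,
      C ≠ 0 ∧ C.det = 0 ∧ ∀ M ∈ L, ⁅M, C⁆ ∈ K ∙ C := by
  set H := L ⊓ sl (Fin 2) K
  let b := finBasisOfFinrankEq K H.toSubmodule hL
  set U := (b 0 : Matrix (Fin 2) (Fin 2) K)
  set W := (b 1 : Matrix (Fin 2) (Fin 2) K)
  have hU : U ∈ H := (b 0).2
  have hW : W ∈ H := (b 1).2
  have hspan (X) (hX : X ∈ H) : ∃ s t : K, X = s • U + t • W := by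
    refine ⟨b.repr ⟨X, hX⟩ 0, b.repr ⟨X, hX⟩ 1, ?_⟩
    have h := congrArg Subtype.val (b.sum_repr ⟨X, hX⟩)
    rw [Fin.sum_univ_two] at h
    exact h.symm
  have hind : LinearIndependent K ![U, W] := by
    refine LinearIndependent.pair_iff.mpr fun s t hst ↦ ?_
    have h := Fintype.linearIndependent_iff.mp b.linearIndependent ![s, t]
      (Subtype.ext (by simpa [Fin.sum_univ_two] using hst))
    exact ⟨h 0, h 1⟩
  set C := ⁅U, W⁆
  have hC : C ∈ H := H.lie_mem hU hW
  have hlie (X Y) (hX : X ∈ H) (hY : Y ∈ H) : ⁅X, Y⁆ ∈ K ∙ C := by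
    obtain ⟨s, t, rfl⟩ := hspan X hX
    obtain ⟨s', t', rfl⟩ := hspan Y hY
    refine Submodule.mem_span_singleton.mpr ⟨s * t' - t * s', ?_⟩
    simp only [add_lie, lie_add, smul_lie, lie_smul, lie_self, ← lie_skew W U]
    module
  have hC0 : C ≠ 0 := fun h ↦ not_linearIndependent_of_lie_eq_zero hU.2 hW.2 h hind
  refine ⟨C, hC0, ?_, fun M hM ↦ ?_⟩
  · obtain ⟨s, t, hst⟩ := hspan C hC
    refine det_eq_zero_of_trace_mul_self_eq_zero hC.2 ?_
    nth_rw 2 [hst]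
    simp [Matrix.mul_add, trace_add, trace_lie_mul_left, trace_lie_mul_right, C]
  · have hMH (X) (hX : X ∈ H) : ⁅M, X⁆ ∈ H :=
      ⟨L.lie_mem hM hX.1, LieAlgebra.matrix_trace_commutator_zero (Fin 2) K M X⟩
    rw [leibniz_lie]
    exact add_mem (hlie _ _ (hMH U hU) hW) (hlie _ _ hU (hMH W hW))

end SpecialLinear

theorem exists_forall_linearIndependent_mulVec_of_map_eq_top
    (L : LieSubalgebra ℝ (Matrix (Fin 2) (Fin 2) ℝ))
    (h : ∀ x ≠ 0, L.toSubmodule.map (mulVecLeft x) = ⊤) :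
    ∃ M ∈ L, ∃ N ∈ L, ∀ x ≠ 0, LinearIndependent ℝ ![M *ᵥ x, N *ᵥ x] := by
  set H := L.toSubmodule ⊓ (sl (Fin 2) ℝ).toSubmodule with hH_def
  have hsl : finrank ℝ (sl (Fin 2) ℝ).toSubmodule = 3 := by
    have := finrank_sl_add_one (K := ℝ) (n := Fin 2)
    simp only [Fintype.card_fin] at this
    omega
  have hH : finrank ℝ H ≤ 3 := hsl ▸ Submodule.finrank_mono inf_le_right
  have hLH : finrank ℝ L.toSubmodule ≤ finrank ℝ H + 1 := by
    have hsup := Submodule.finrank_le (L.toSubmodule ⊔ (sl (Fin 2) ℝ).toSubmodule)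
    have := Submodule.finrank_sup_add_finrank_inf_eq L.toSubmodule (sl (Fin 2) ℝ).toSubmodule
    rw [← hH_def] at this
    simp only [finrank_matrix, Fintype.card_fin, finrank_self] at hsup
    omega
  obtain h3 | h2 | h1 : finrank ℝ H = 3 ∨ finrank ℝ H = 2 ∨ finrank ℝ H ≤ 1 := by omega
  · have hHsl : H = (sl (Fin 2) ℝ).toSubmodule :=
      Submodule.eq_of_le_of_finrank_le inf_le_right (by rw [h3, hsl])
    have hslL (M : Matrix (Fin 2) (Fin 2) ℝ) (hM : trace M = 0) : M ∈ L :=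
      (show M ∈ H from hHsl ▸ hM).1
    refine ⟨!![1, 0; 0, -1], hslL _ (by simp), !![0, 1; 1, 0], hslL _ (by simp),
      (forall_linearIndependent_mulVec_pair_iff_discrim_neg _ _).mpr ?_⟩
    norm_num [adjugate_fin_two, trace_fin_two, det_fin_two]
  · obtain ⟨C, hC, hdet, hCL⟩ := exists_det_eq_zero_lie_mem_span_singleton L h2
    obtain ⟨x, hx, hne⟩ := exists_ne_zero_map_mulVecLeft_ne_top (S := L.toSubmodule) hC hdet hCL
    exact absurd (h x hx) hne
  · exact exists_forall_linearIndependent_of_finrank_le_two (by omega) h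

/-- The Lie algebra rank condition for the bilinear system `ẋ = (A + uB)x` on
`ℝ² \ {0}` holds iff there exist `A'`, `B'` in the Lie algebra generated by
`{A + uB : u ∈ ℝ}` with `tr(adj(A')B')² − 4 det(adj(A')B') < 0`. -/
theorem larc_iff_exists_complex_eigenvalue (A B : Matrix (Fin 2) (Fin 2) ℝ) :
    (∀ x : Fin 2 → ℝ, x ≠ 0 →
      Submodule.span ℝ
        {y : Fin 2 → ℝ | ∃ M ∈ LieSubalgebra.lieSpan ℝ (Matrix (Fin 2) (Fin 2) ℝ)
          {M | ∃ u : ℝ, M = A + u • B}, y = M.mulVec x} = ⊤) ↔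
    (∃ A' ∈ LieSubalgebra.lieSpan ℝ (Matrix (Fin 2) (Fin 2) ℝ)
        {M | ∃ u : ℝ, M = A + u • B},
     ∃ B' ∈ LieSubalgebra.lieSpan ℝ (Matrix (Fin 2) (Fin 2) ℝ)
        {M | ∃ u : ℝ, M = A + u • B},
      (Matrix.trace (A'.adjugate * B')) ^ 2 - 4 * (A'.adjugate * B').det < 0) := by
  set L := LieSubalgebra.lieSpan ℝ (Matrix (Fin 2) (Fin 2) ℝ) {M | ∃ u : ℝ, M = A + u • B}
  have hmap (x : Fin 2 → ℝ) : Submodule.span ℝ {y | ∃ M ∈ L, y = M *ᵥ x} =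
      L.toSubmodule.map (mulVecLeft x) :=
    span_setOf_mulVec_eq_map L.toSubmodule x
  simp only [hmap, ← forall_linearIndependent_mulVec_pair_iff_discrim_neg]
  refine ⟨exists_forall_linearIndependent_mulVec_of_map_eq_top L, ?_⟩
  rintro ⟨M, hM, N, hN, hMN⟩ x hx
  exact map_mulVecLeft_eq_top_of_linearIndependent hM hN (hMN x hx)
end

section
/- Let A and B be 2×2 real matrices. Then the vectors A·x and B·x are linearly independent for every nonzero x ∈ ℝ² if and only if tr(adj(A)·B)² − 4·det(adj(A)·B) < 0, where adj(A) denotes the adjugate (classical adjoint) of A (equivalently, the matrix adj(A)·B has non-real complex eigenvalues). -/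
/-- Linear independence of a pair of vectors in `ℝ²` via the 2×2 determinant. -/
lemma pair_li_iff_det (u v : Fin 2 → ℝ) :
    LinearIndependent ℝ ![u, v] ↔ u 0 * v 1 - u 1 * v 0 ≠ 0 := by
  rw [LinearIndependent.pair_iff]
  constructor
  · intro h hd
    by_cases h1 : u 1 = 0 ∧ v 1 = 0
    · by_cases h0 : u 0 = 0 ∧ v 0 = 0
      · have := h 1 0 (by
          funext i
          fin_cases i <;> simp [h0.1, h0.2, h1.1, h1.2])
        simp at this
      · have := h (v 0) (-(u 0)) (by
          funext i
          fin_cases i <;> simp [h1.1, h1.2] <;> ring)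
        rcases this with ⟨hv0, hu0⟩
        exact h0 ⟨by simpa using hu0, hv0⟩
    · have := h (v 1) (-(u 1)) (by
        funext i
        fin_cases i
        · simp; nlinarith
        · simp; ring)
      rcases this with ⟨hv1, hu1⟩
      exact h1 ⟨by simpa using hu1, hv1⟩
  · intro hd s t hst
    have e0 : s * u 0 + t * v 0 = 0 := by simpa using congrFun hst 0
    have e1 : s * u 1 + t * v 1 = 0 := by simpa using congrFun hst 1
    constructor
    · have : s * (u 0 * v 1 - u 1 * v 0) = 0 := by linear_combination v 1 * e0 - v 0 * e1
      exact (mul_eq_zero.mp this).resolve_right hd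
    · have : t * (u 0 * v 1 - u 1 * v 0) = 0 := by linear_combination u 0 * e1 - u 1 * e0
      exact (mul_eq_zero.mp this).resolve_right hd

/-- A real binary quadratic form is anisotropic iff its discriminant is negative. -/
lemma quad_aniso_iff (a b c : ℝ) :
    (∀ s t : ℝ, ¬(s = 0 ∧ t = 0) → a * s ^ 2 + b * s * t + c * t ^ 2 ≠ 0) ↔
    b ^ 2 - 4 * a * c < 0 := by
  constructor
  · intro h
    by_contra hd
    push_neg at hd
    have ha : a ≠ 0 := by
      intro h0
      exact h 1 0 (by simp) (by simp [h0])
    set r := Real.sqrt (b ^ 2 - 4 * a * c) with hr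
    have hr2 : r ^ 2 = b ^ 2 - 4 * a * c := Real.sq_sqrt (by linarith)
    refine h ((-b + r) / (2 * a)) 1 (by simp) ?_
    field_simp
    nlinarith [hr2]
  · intro hd s t hst h0
    have ha : a ≠ 0 := by
      intro h0
      rw [h0] at hd
      nlinarith [sq_nonneg b]
    by_cases ht : t = 0
    · have hs : s ≠ 0 := fun hs => hst ⟨hs, ht⟩
      rw [ht] at h0
      have : a * s ^ 2 = 0 := by linarith [h0]; 
      rcases mul_eq_zero.mp this with h | h
      · exact ha h
      · exact hs (by nlinarith [sq_nonneg s])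
    · have ht2 : (0:ℝ) < t ^ 2 := by positivity
      have key : (2 * a * s + b * t) ^ 2 + (4 * a * c - b ^ 2) * t ^ 2 = 0 := by
        linear_combination 4 * a * h0
      nlinarith [sq_nonneg (2 * a * s + b * t),
        mul_pos (show (0:ℝ) < 4 * a * c - b ^ 2 by linarith) ht2]

/-- `Ax` and `Bx` are linearly independent for every nonzero `x ∈ ℝ²` iff
`tr(adj(A)B)² − 4 det(adj(A)B) < 0`. -/
theorem linearIndependent_iff_discriminant_neg (A B : Matrix (Fin 2) (Fin 2) ℝ) :
    (∀ x : Fin 2 → ℝ, x ≠ 0 → LinearIndependent ℝ ![A.mulVec x, B.mulVec x]) ↔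
    (Matrix.trace (A.adjugate * B)) ^ 2 - 4 * (A.adjugate * B).det < 0 := by
  have hx0 : ∀ x : Fin 2 → ℝ, x ≠ 0 ↔ ¬(x 0 = 0 ∧ x 1 = 0) := by
    intro x
    constructor
    · intro hx ⟨h0, h1⟩
      exact hx (funext fun i => by fin_cases i <;> simpa)
    · intro h hx
      exact h ⟨by simp [hx], by simp [hx]⟩
  -- the quadratic form coefficients
  set a := A 0 0 * B 1 0 - A 1 0 * B 0 0 with ha
  set b := A 0 0 * B 1 1 - A 1 0 * B 0 1 + (A 0 1 * B 1 0 - A 1 1 * B 0 0) with hb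
  set c := A 0 1 * B 1 1 - A 1 1 * B 0 1 with hc
  have hform : ∀ x : Fin 2 → ℝ,
      (A.mulVec x) 0 * (B.mulVec x) 1 - (A.mulVec x) 1 * (B.mulVec x) 0 =
      a * (x 0) ^ 2 + b * (x 0) * (x 1) + c * (x 1) ^ 2 := by
    intro x
    simp [Matrix.mulVec, dotProduct, Fin.sum_univ_two, ha, hb, hc]
    ring
  have hdisc : (Matrix.trace (A.adjugate * B)) ^ 2 - 4 * (A.adjugate * B).det =
      b ^ 2 - 4 * a * c := by
    simp [Matrix.adjugate_fin_two, Matrix.trace_fin_two, Matrix.mul_apply,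
      Matrix.det_fin_two, Matrix.vecMul, dotProduct, Fin.sum_univ_two, ha, hb, hc]
    ring
  rw [hdisc, ← quad_aniso_iff]
  constructor
  · intro h s t hst
    have := (pair_li_iff_det _ _).mp (h ![s, t] ((hx0 _).mpr (by simpa using hst)))
    rw [hform ![s, t]] at this
    simpa using this
  · intro h x hx
    rw [pair_li_iff_det, hform]
    exact h (x 0) (x 1) ((hx0 x).mp hx)
end

section
/- Let A and B be 2×2 real matrices with det([A,B]) > 0, where [A,B] = AB − BA, and define Δ(u) = tr(A + u·B)² − 4·det(A + u·B) for u ∈ ℝ. If tr(B)² − 4·det(B) < 0 (B has non-real eigenvalues), then Δ(u) < 0 for every u ∈ ℝ; if tr(B)² − 4·det(B) > 0 (B has two distinct real eigenvalues), then Δ(u) > 0 for every u ∈ ℝ. -/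
/-!
`Δ(X) = tr(X)² − 4 det X` is the quadratic form of the symmetric bilinear form
`β(X, Y) = 2 tr(XY) − tr X tr Y` on `2 × 2` matrices, so `Δ(A + uB)` is the quadratic polynomial
`Δ(B) u² + 2 β(A, B) u + Δ(A)` in `u`. Its discriminant is the polynomial identity
`4 β(A, B)² − 4 Δ(A) Δ(B) = −16 det [A, B]`, which is negative when `det [A, B] > 0`; a real
quadratic with negative discriminant has the sign of its leading coefficient `Δ(B)` everywhere.
-/

section Quadratic

variable {K : Type*} [CommRing K] [LinearOrder K] [IsStrictOrderedRing K] {a b c : K}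

theorem quadratic_pos_of_discrim_neg (ha : 0 < a) (h : discrim a b c < 0) (x : K) :
    0 < a * (x * x) + b * x + c := by
  have hsq : 4 * a * (a * (x * x) + b * x + c) = (2 * a * x + b) ^ 2 - discrim a b c := by
    rw [discrim]; ring
  have hpos : 0 < 4 * a * (a * (x * x) + b * x + c) := by
    rw [hsq]; nlinarith [sq_nonneg (2 * a * x + b)]
  exact pos_of_mul_pos_right hpos (by positivity)

theorem quadratic_neg_of_discrim_neg (ha : a < 0) (h : discrim a b c < 0) (x : K) :
    a * (x * x) + b * x + c < 0 := by
  have := quadratic_pos_of_discrim_neg (neg_pos.2 ha) ((discrim_neg a b c).symm ▸ h) x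
  linarith

end Quadratic

namespace Matrix

variable {R : Type*} [CommRing R] (A B : Matrix (Fin 2) (Fin 2) R)

theorem trace_add_smul_sq_sub_four_mul_det (u : R) :
    trace (A + u • B) ^ 2 - 4 * det (A + u • B) =
      (trace B ^ 2 - 4 * det B) * (u * u) + 2 * (2 * trace (A * B) - trace A * trace B) * u +
        (trace A ^ 2 - 4 * det A) := by
  simp only [trace_fin_two, det_fin_two, add_apply, smul_apply, smul_eq_mul, mul_apply,
    Fin.sum_univ_two]
  ring

theorem discrim_trace_sq_sub_four_mul_det :
    discrim (trace B ^ 2 - 4 * det B) (2 * (2 * trace (A * B) - trace A * trace B))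
      (trace A ^ 2 - 4 * det A) = -16 * det (A * B - B * A) := by
  simp only [discrim, trace_fin_two, det_fin_two, sub_apply, mul_apply, Fin.sum_univ_two]
  ring

end Matrix

/-- If `det[A,B] > 0`, then: if `B` has non-real eigenvalues
(`tr(B)² − 4 det B < 0`) the discriminant `Δ(u) = tr(A+uB)² − 4 det(A+uB)` is
negative for all `u`, and if `B` has two distinct real eigenvalues
(`tr(B)² − 4 det B > 0`) then `Δ(u)` is positive for all `u`. -/
theorem discriminant_sign_of_det_commutator_pos (A B : Matrix (Fin 2) (Fin 2) ℝ)
    (h : 0 < (A * B - B * A).det) :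
    ((Matrix.trace B) ^ 2 - 4 * B.det < 0 →
      ∀ u : ℝ, (Matrix.trace (A + u • B)) ^ 2 - 4 * (A + u • B).det < 0) ∧
    (0 < (Matrix.trace B) ^ 2 - 4 * B.det →
      ∀ u : ℝ, 0 < (Matrix.trace (A + u • B)) ^ 2 - 4 * (A + u • B).det) := by
  have hdiscrim : discrim (B.trace ^ 2 - 4 * B.det) (2 * (2 * (A * B).trace - A.trace * B.trace))
      (A.trace ^ 2 - 4 * A.det) < 0 := by
    rw [Matrix.discrim_trace_sq_sub_four_mul_det]
    linarith
  refine ⟨fun hB u => ?_, fun hB u => ?_⟩ <;> rw [Matrix.trace_add_smul_sq_sub_four_mul_det]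
  · exact quadratic_neg_of_discrim_neg hB hdiscrim u
  · exact quadratic_pos_of_discrim_neg hB hdiscrim u
end

section
/- Let A and B be 2×2 real matrices and [A,B] = AB − BA. Then tr(adj(A)·[A,B]) = 0, and consequently the vectors A·x and [A,B]·x are linearly independent for every nonzero x ∈ ℝ² if and only if det(A)·det([A,B]) > 0. -/
/-!
Since `adj A * A = A * adj A = det A • 1`, cyclicity of the trace gives
`tr (adj A * (A B - B A)) = det A * tr B - det A * tr B = 0` in every dimension.
For `2 × 2` matrices, `x ↦ det [A x, M x]` is a binary quadratic form whose discriminant is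
`tr (adj A * M)² - 4 det A det M`; for `M = [A, B]` this is `-4 det A det M`. The vectors `A x`
and `M x` are independent for all `x ≠ 0` exactly when this form is anisotropic, i.e. when its
discriminant is negative.
-/

open Matrix

theorem Matrix.trace_adjugate_mul_commutator {n R : Type*} [Fintype n] [DecidableEq n]
    [CommRing R] (A B : Matrix n n R) : trace (adjugate A * (A * B - B * A)) = 0 := by
  rw [Matrix.mul_sub, ← Matrix.mul_assoc, adjugate_mul, ← Matrix.mul_assoc,
    trace_sub, trace_mul_cycle, mul_adjugate, sub_self]

theorem linearIndependent_pair_fin_two_iff {K : Type*} [Field K] (u v : Fin 2 → K) :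
    LinearIndependent K ![u, v] ↔ u 0 * v 1 - u 1 * v 0 ≠ 0 := by
  rw [show ![u, v] = (of ![u, v]).row from rfl, linearIndependent_rows_iff_isUnit,
    isUnit_iff_isUnit_det, isUnit_iff_ne_zero, det_fin_two]
  simp

theorem Matrix.exists_det_pair_mulVec_eq_quadratic {R : Type*} [CommRing R]
    (A M : Matrix (Fin 2) (Fin 2) R) :
    ∃ a b c : R, (∀ x : Fin 2 → R,
        (A *ᵥ x) 0 * (M *ᵥ x) 1 - (A *ᵥ x) 1 * (M *ᵥ x) 0 =
          a * x 0 ^ 2 + b * x 0 * x 1 + c * x 1 ^ 2) ∧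
      discrim a b c = trace (adjugate A * M) ^ 2 - 4 * (A.det * M.det) := by
  refine ⟨A 0 0 * M 1 0 - A 1 0 * M 0 0,
    A 0 0 * M 1 1 - A 1 0 * M 0 1 + A 0 1 * M 1 0 - A 1 1 * M 0 0,
    A 0 1 * M 1 1 - A 1 1 * M 0 1, fun x => ?_, ?_⟩
  · simp only [mulVec, dotProduct, Fin.sum_univ_two]
    ring
  · simp only [discrim, trace_fin_two, adjugate_fin_two, det_fin_two, mul_apply,
      Fin.sum_univ_two, of_apply, cons_val', cons_val_zero, cons_val_one, empty_val',
      cons_val_fin_one]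
    ring

theorem binary_quadratic_ne_zero_iff_discrim_neg {a b c : ℝ} :
    (∀ x : Fin 2 → ℝ, x ≠ 0 → a * x 0 ^ 2 + b * x 0 * x 1 + c * x 1 ^ 2 ≠ 0) ↔
      discrim a b c < 0 := by
  unfold discrim
  constructor
  · intro h
    have ha : a ≠ 0 := by simpa using h ![1, 0] (by simp)
    by_contra! hd
    have hs := Real.sq_sqrt hd
    -- `2a` times the root `((√discrim - b) / 2a, 1)` of the quadratic formula
    refine h ![√(b ^ 2 - 4 * a * c) - b, 2 * a] (by simp [ha]) ?_
    simp only [cons_val_zero, cons_val_one]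
    linear_combination a * hs
  · intro hd x hx hq
    have ha : a ≠ 0 := by rintro rfl; nlinarith [sq_nonneg b]
    -- completing the square: `4 a q(x) = (2 a x₀ + b x₁)² - discrim a b c * x₁²`
    have hsq : (2 * a * x 0 + b * x 1) ^ 2 + (4 * a * c - b ^ 2) * x 1 ^ 2 = 0 := by
      linear_combination 4 * a * hq
    have hx1 : x 1 = 0 := by
      have h : (4 * a * c - b ^ 2) * x 1 ^ 2 = 0 := by
        nlinarith [sq_nonneg (2 * a * x 0 + b * x 1), sq_nonneg (x 1)]
      simpa [show 4 * a * c - b ^ 2 ≠ 0 by linarith] using h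
    have hx0 : x 0 = 0 := by
      rw [hx1] at hsq
      simpa [ha] using hsq
    exact hx (funext (Fin.forall_fin_two.2 ⟨hx0, hx1⟩))

/-- `tr(adj(A)[A,B]) = 0`, and consequently `Ax` and `[A,B]x` are linearly
independent for all nonzero `x ∈ ℝ²` iff `det(A)·det[A,B] > 0`. -/
theorem trace_adjugate_commutator_eq_zero_and_linearIndependent_iff
    (A B : Matrix (Fin 2) (Fin 2) ℝ) :
    Matrix.trace (A.adjugate * (A * B - B * A)) = 0 ∧
    ((∀ x : Fin 2 → ℝ, x ≠ 0 →
        LinearIndependent ℝ ![A.mulVec x, (A * B - B * A).mulVec x]) ↔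
      0 < A.det * (A * B - B * A).det) := by
  have htrace := trace_adjugate_mul_commutator A B
  refine ⟨htrace, ?_⟩
  obtain ⟨a, b, c, hform, hdiscrim⟩ := exists_det_pair_mulVec_eq_quadratic A (A * B - B * A)
  simp_rw [linearIndependent_pair_fin_two_iff, hform]
  rw [binary_quadratic_ne_zero_iff_discrim_neg, hdiscrim, htrace]
  constructor <;> intro h <;> linarith
end

section
/- Let A and B be 2×2 real matrices, and set α = tr(B)² − 4·det(B), β = 2·[2·tr(A·B) − tr(A)·tr(B)], and γ = tr(A)² − 4·det(A). Then β² − 4·α·γ = −16·det([A,B]), where [A,B] = AB − BA. -/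
/-- With `α = tr(B)² − 4 det B`, `β = 2[2 tr(AB) − tr(A)tr(B)]`,
`γ = tr(A)² − 4 det A`, we have `β² − 4αγ = −16 det[A,B]`. -/
theorem discriminant_of_discriminant (A B : Matrix (Fin 2) (Fin 2) ℝ)
    (α β γ : ℝ)
    (hα : α = (Matrix.trace B) ^ 2 - 4 * B.det)
    (hβ : β = 2 * (2 * Matrix.trace (A * B) - Matrix.trace A * Matrix.trace B))
    (hγ : γ = (Matrix.trace A) ^ 2 - 4 * A.det) :
    β ^ 2 - 4 * α * γ = -16 * (A * B - B * A).det := by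
  subst hα hβ hγ
  simp [Matrix.det_fin_two, Matrix.trace_fin_two, Matrix.mul_apply,
    Fin.sum_univ_two, Matrix.sub_apply]
  ring
end

section
/- Let A and B be 2×2 real matrices with α = tr(B)² − 4·det(B) ≠ 0, and set β = 2·[2·tr(A·B) − tr(A)·tr(B)]. Define Δ(u) = tr(A + u·B)² − 4·det(A + u·B). Then Δ(−β/(2α)) = 4·det([A,B])/α, where [A,B] = AB − BA; this value is the maximum of Δ over ℝ if α < 0 and the minimum of Δ over ℝ if α > 0. -/
/-- If `α = tr(B)² − 4 det B ≠ 0` and `β = 2[2 tr(AB) − tr(A)tr(B)]`, then the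
discriminant `Δ(u) = tr(A+uB)² − 4 det(A+uB)` satisfies
`Δ(−β/(2α)) = 4 det[A,B]/α`, and this value is the maximum of `Δ` if `α < 0`
and the minimum of `Δ` if `α > 0`. -/
theorem discriminant_extremum (A B : Matrix (Fin 2) (Fin 2) ℝ) (α β : ℝ)
    (hα : α = (Matrix.trace B) ^ 2 - 4 * B.det)
    (hβ : β = 2 * (2 * Matrix.trace (A * B) - Matrix.trace A * Matrix.trace B))
    (hα0 : α ≠ 0)
    (Δ : ℝ → ℝ)
    (hΔ : ∀ u : ℝ, Δ u = (Matrix.trace (A + u • B)) ^ 2 - 4 * (A + u • B).det) :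
    Δ (-β / (2 * α)) = 4 * (A * B - B * A).det / α ∧
    (α < 0 → ∀ u : ℝ, Δ u ≤ Δ (-β / (2 * α))) ∧
    (0 < α → ∀ u : ℝ, Δ (-β / (2 * α)) ≤ Δ u) := by
  set γ : ℝ := (Matrix.trace A) ^ 2 - 4 * A.det with hγ
  have key : ∀ u : ℝ, Δ u = α * u ^ 2 + β * u + γ := by
    intro u
    rw [hΔ, hα, hβ, hγ]
    simp [Matrix.trace_fin_two, Matrix.det_fin_two, Matrix.mul_apply,
      Fin.sum_univ_two, Matrix.add_apply, Matrix.smul_apply, smul_eq_mul]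
    ring
  have hid : β ^ 2 - 4 * α * γ = -16 * (A * B - B * A).det := by
    rw [hα, hβ, hγ]
    simp [Matrix.trace_fin_two, Matrix.det_fin_two, Matrix.mul_apply,
      Fin.sum_univ_two, Matrix.sub_apply]
    ring
  have hdet : (A * B - B * A).det = (4 * α * γ - β ^ 2) / 16 := by linear_combination (1/16 : ℝ) * hid
  have hdiff : ∀ u : ℝ, Δ u - Δ (-β / (2 * α)) = α * (u - (-β / (2 * α))) ^ 2 := by
    intro u
    rw [key, key]
    field_simp
    ring
  refine ⟨?_, ?_, ?_⟩
  · rw [key, hdet]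
    field_simp
    ring
  · intro h u
    nlinarith [hdiff u, sq_nonneg (u - (-β / (2 * α)))]
  · intro h u
    nlinarith [hdiff u, sq_nonneg (u - (-β / (2 * α)))]
end

section
/- Let A and B be 2×2 real matrices and define Δ(u) = tr(A + u·B)² − 4·det(A + u·B) for u ∈ ℝ. Then there exists u ∈ ℝ with Δ(u) < 0 if and only if one of the following holds: (1) det([A,B]) < 0; or (2) det([A,B]) > 0 and tr(B)² − 4·det(B) < 0; or (3) det([A,B]) = 0 and either (a) tr(B)² − 4·det(B) = 0, tr(adj(A)·B) = tr(A·B), and tr(A)² − 4·det(A) < 0, or (b) tr(B)² − 4·det(B) < 0 or tr(A)² − 4·det(A) < 0. -/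
/-!
Writing `disc M = (tr M)² − 4 det M`, `Δ(u)` is the quadratic
`disc B · u² + 2 (tr(AB) − tr(adj A · B)) · u + disc A`, and a direct computation shows that its
own discriminant is `−16 det [A, B]`. A real quadratic takes a negative value exactly when its
discriminant is positive or its leading or constant coefficient is negative, so `Δ` takes a
negative value iff `det [A, B] < 0`, `disc B < 0` or `disc A < 0`. When `det [A, B] > 0`, the
identity forces `disc A · disc B > 0`, so `disc A < 0` already gives `disc B < 0`.
-/

section Quadratic

variable {K : Type*} [Field K] [LinearOrder K] [IsStrictOrderedRing K]

theorem forall_quadratic_nonneg_iff {a b c : K} :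
    (∀ x, 0 ≤ a * (x * x) + b * x + c) ↔ discrim a b c ≤ 0 ∧ 0 ≤ a ∧ 0 ≤ c := by
  constructor
  · intro h
    have hd := discrim_le_zero h
    refine ⟨hd, ?_, by simpa using h 0⟩
    by_contra! ha
    have : 0 < c := by linarith [h 1, h (-1)]
    rw [discrim] at hd
    nlinarith [sq_nonneg b]
  · rintro ⟨hd, ha, hc⟩ x
    rw [discrim] at hd
    rcases ha.eq_or_lt with rfl | ha
    · obtain rfl : b = 0 := by nlinarith [sq_nonneg b]
      simpa using hc
    · nlinarith [sq_nonneg (2 * a * x + b)]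

theorem exists_quadratic_neg_iff {a b c : K} :
    (∃ x, a * (x * x) + b * x + c < 0) ↔ 0 < discrim a b c ∨ a < 0 ∨ c < 0 := by
  rw [← not_iff_not]
  push Not
  exact forall_quadratic_nonneg_iff

end Quadratic

namespace Matrix

variable {R : Type*} [CommRing R]

def charDisc (M : Matrix (Fin 2) (Fin 2) R) : R := M.trace ^ 2 - 4 * M.det

theorem charDisc_add_smul (A B : Matrix (Fin 2) (Fin 2) R) (u : R) :
    charDisc (A + u • B) =
      charDisc B * (u * u) + 2 * (trace (A * B) - trace (adjugate A * B)) * u + charDisc A := by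
  simp only [charDisc, trace_fin_two, det_fin_two, adjugate_fin_two, mul_apply,
    Matrix.add_apply, Matrix.smul_apply, smul_eq_mul, Fin.sum_univ_two, of_apply, cons_val_zero,
    cons_val_one, cons_val_fin_one]
  ring

theorem discrim_charDisc_eq_neg_det_commutator (A B : Matrix (Fin 2) (Fin 2) R) :
    discrim (charDisc B) (2 * (trace (A * B) - trace (adjugate A * B))) (charDisc A) =
      -16 * det (A * B - B * A) := by
  simp only [discrim, charDisc, trace_fin_two, det_fin_two, adjugate_fin_two, mul_apply,
    Matrix.sub_apply, Fin.sum_univ_two, of_apply, cons_val_zero, cons_val_one,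
    cons_val_fin_one]
  ring

section Ordered

variable {K : Type*} [Field K] [LinearOrder K] [IsStrictOrderedRing K]

theorem exists_charDisc_add_smul_neg_iff (A B : Matrix (Fin 2) (Fin 2) K) :
    (∃ u : K, charDisc (A + u • B) < 0) ↔
      det (A * B - B * A) < 0 ∨ charDisc B < 0 ∨ charDisc A < 0 := by
  simp only [charDisc_add_smul, exists_quadratic_neg_iff,
    discrim_charDisc_eq_neg_det_commutator]
  exact or_congr_left ⟨fun h => by linarith, fun h => by linarith⟩

theorem charDisc_mul_pos_of_det_commutator_pos {A B : Matrix (Fin 2) (Fin 2) K}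
    (h : 0 < det (A * B - B * A)) : 0 < charDisc A * charDisc B := by
  have := discrim_charDisc_eq_neg_det_commutator A B
  rw [discrim] at this
  nlinarith [sq_nonneg (2 * (trace (A * B) - trace (adjugate A * B)))]

end Ordered

end Matrix

/-- There exists `u ∈ ℝ` with `Δ(u) = tr(A+uB)² − 4 det(A+uB) < 0` iff
(1) `det[A,B] < 0`; or (2) `det[A,B] > 0` and `B` has non-real eigenvalues; or
(3) `det[A,B] = 0` and either (a) `B` has a unique real eigenvalue,
`tr(adj(A)B) = tr(AB)` and `A` has non-real eigenvalues, or (b) `B` or `A`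
has non-real eigenvalues. -/
theorem exists_discriminant_neg_iff (A B : Matrix (Fin 2) (Fin 2) ℝ) :
    (∃ u : ℝ, (Matrix.trace (A + u • B)) ^ 2 - 4 * (A + u • B).det < 0) ↔
    ((A * B - B * A).det < 0 ∨
     (0 < (A * B - B * A).det ∧ (Matrix.trace B) ^ 2 - 4 * B.det < 0) ∨
     ((A * B - B * A).det = 0 ∧
       (((Matrix.trace B) ^ 2 - 4 * B.det = 0 ∧
           Matrix.trace (A.adjugate * B) = Matrix.trace (A * B) ∧
           (Matrix.trace A) ^ 2 - 4 * A.det < 0) ∨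
        ((Matrix.trace B) ^ 2 - 4 * B.det < 0 ∨
           (Matrix.trace A) ^ 2 - 4 * A.det < 0)))) := by
  simp only [← Matrix.charDisc.eq_1]
  rw [Matrix.exists_charDisc_add_smul_neg_iff]
  rcases lt_trichotomy (A * B - B * A).det 0 with hD | hD | hD
  · exact iff_of_true (.inl hD) (.inl hD)
  · have hD_not_pos := hD.not_gt
    tauto
  · have hD_not_neg := hD.not_gt
    have hD_ne := hD.ne'
    have hA_imp_hB : A.charDisc < 0 → B.charDisc < 0 := fun hA => by
      nlinarith [Matrix.charDisc_mul_pos_of_det_commutator_pos hD]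
    tauto
end
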